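/- Hyperbolic intertwining, one step: for integer k ≥ 1 and n ≥ 2, the operator Γ_k = ∂_r + (n+k−2) coth(r) satisfies Γ_k ∘ D_{k,r} = D_{k−1,r} ∘ Γ_k on smooth functions of r > 0, where D_{m,r} = ∂_r² + (n−1)coth(r) ∂_r − m(m+n−2)/sinh²(r). -/

import Mathlib

/-- `Γ_k = ∂_r + (n+k−2) coth(r)`. -/
noncomputable def Gam (n k : ℕ) (g : ℝ → ℝ) : ℝ → ℝ :=
  fun r => deriv g r + ((n : ℝ) + k - 2) * (Real.cosh r / Real.sinh r) * g r

/-- `D_{m,r} = ∂_r² + (n−1)coth(r)∂_r − m(m+n−2)/sinh²(r)`. -/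
noncomputable def Dop (n m : ℕ) (g : ℝ → ℝ) : ℝ → ℝ :=
  fun r => deriv (deriv g) r + ((n : ℝ) - 1) * (Real.cosh r / Real.sinh r) * deriv g r
    - ((m : ℝ) * ((m : ℝ) + n - 2) / (Real.sinh r) ^ 2) * g r

/-- Derivative of hyperbolic cotangent on `(0,∞)`. -/
lemma coth_hasDerivAt (x : ℝ) (hx : 0 < x) :
    HasDerivAt (fun y => Real.cosh y / Real.sinh y) (-1 / Real.sinh x ^ 2) x := by
  have hs : Real.sinh x ≠ 0 := (Real.sinh_pos_iff.2 hx).ne'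
  have h := (Real.hasDerivAt_cosh x).div (Real.hasDerivAt_sinh x) hs
  refine h.congr_deriv ?_
  have hc : Real.cosh x ^ 2 = Real.sinh x ^ 2 + 1 := Real.cosh_sq x
  congr 1
  nlinarith [hc]

/-- Hyperbolic one-step intertwining: `Γ_k ∘ D_{k,r} = D_{k−1,r} ∘ Γ_k` on smooth
functions on `(0,∞)`. -/
theorem hyperbolic_intertwining_step (n k : ℕ) (hn : 2 ≤ n) (hk : 1 ≤ k)
    (g : ℝ → ℝ) (hg : ContDiffOn ℝ (⊤ : ℕ∞) g (Set.Ioi 0)) :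
    ∀ r ∈ Set.Ioi (0 : ℝ),
      Gam n k (Dop n k g) r = Dop n (k - 1) (Gam n k g) r := by
  have hU : IsOpen (Set.Ioi (0:ℝ)) := isOpen_Ioi
  have hg1 : ContDiffOn ℝ (⊤ : ℕ∞) (deriv g) (Set.Ioi 0) := hg.deriv_of_isOpen hU (by simp)
  have hg2 : ContDiffOn ℝ (⊤ : ℕ∞) (deriv (deriv g)) (Set.Ioi 0) := hg1.deriv_of_isOpen hU (by simp)
  -- pointwise HasDerivAt facts on Ioi 0
  have hH0 : ∀ x ∈ Set.Ioi (0:ℝ), HasDerivAt g (deriv g x) x := fun x hx =>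
    ((hg.differentiableOn (by simp)).differentiableAt (hU.mem_nhds hx)).hasDerivAt
  have hH1 : ∀ x ∈ Set.Ioi (0:ℝ), HasDerivAt (deriv g) (deriv (deriv g) x) x := fun x hx =>
    ((hg1.differentiableOn (by simp)).differentiableAt (hU.mem_nhds hx)).hasDerivAt
  have hH2 : ∀ x ∈ Set.Ioi (0:ℝ), HasDerivAt (deriv (deriv g)) (deriv (deriv (deriv g)) x) x :=
    fun x hx =>
    ((hg2.differentiableOn (by simp)).differentiableAt (hU.mem_nhds hx)).hasDerivAt
  intro r hr
  have hr0 : (0:ℝ) < r := hr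
  have hs : Real.sinh r ≠ 0 := (Real.sinh_pos_iff.2 hr0).ne'
  have hmem : Set.Ioi (0:ℝ) ∈ nhds r := hU.mem_nhds hr
  set A : ℝ := (n : ℝ) + k - 2 with hA
  set B : ℝ := (n : ℝ) - 1 with hB
  set M : ℝ := (k : ℝ) * ((k : ℝ) + n - 2) with hM
  set M' : ℝ := ((k - 1 : ℕ) : ℝ) * (((k - 1 : ℕ) : ℝ) + n - 2) with hM'
  -- derivative of 1/sinh^2 type terms
  have hsinhsq : ∀ x ∈ Set.Ioi (0:ℝ),
      HasDerivAt (fun y => Real.sinh y ^ 2) (2 * Real.sinh x ^ 1 * Real.cosh x) x := by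
    intro x hx
    exact (Real.hasDerivAt_sinh x).pow 2
  -- Step A : derivative of Dop n k g at r
  have hDop : HasDerivAt (Dop n k g)
      (deriv (deriv (deriv g)) r
        + (B * (-1 / Real.sinh r ^ 2) * deriv g r
            + B * (Real.cosh r / Real.sinh r) * deriv (deriv g) r)
        - (((0 * Real.sinh r ^ 2 - M * (2 * Real.sinh r ^ 1 * Real.cosh r)) /
              (Real.sinh r ^ 2) ^ 2) * g r
            + M / Real.sinh r ^ 2 * deriv g r)) r := by
    have h2 := hH2 r hr
    have hterm2 : HasDerivAt (fun x => B * (Real.cosh x / Real.sinh x) * deriv g x)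
        (B * (-1 / Real.sinh r ^ 2) * deriv g r
          + B * (Real.cosh r / Real.sinh r) * deriv (deriv g) r) r :=
      (((coth_hasDerivAt r hr0).const_mul B)).mul (hH1 r hr)
    have hinv : HasDerivAt (fun x => M / Real.sinh x ^ 2)
        ((0 * Real.sinh r ^ 2 - M * (2 * Real.sinh r ^ 1 * Real.cosh r)) /
          (Real.sinh r ^ 2) ^ 2) r :=
      (hasDerivAt_const r M).div (hsinhsq r hr) (pow_ne_zero 2 hs)
    have hterm3 := hinv.mul (hH0 r hr)
    exact (h2.add hterm2).sub hterm3
  have hDopderiv := hDop.deriv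
  -- Step B : deriv of Gam n k g agrees with an explicit formula on Ioi 0
  have hGamEq : Set.EqOn (deriv (Gam n k g))
      (fun x => deriv (deriv g) x
        + A * ((-1 / Real.sinh x ^ 2) * g x + (Real.cosh x / Real.sinh x) * deriv g x))
      (Set.Ioi 0) := by
    intro x hx
    have h : HasDerivAt (Gam n k g)
        (deriv (deriv g) x
          + A * ((-1 / Real.sinh x ^ 2) * g x + (Real.cosh x / Real.sinh x) * deriv g x)) x := by
      have hc : HasDerivAt (fun y => A * (Real.cosh y / Real.sinh y) * g y)
          (A * (-1 / Real.sinh x ^ 2) * g x + A * (Real.cosh x / Real.sinh x) * deriv g x) x :=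
        (((coth_hasDerivAt x hx).const_mul A)).mul (hH0 x hx)
      have := (hH1 x hx).add hc
      refine this.congr_deriv ?_
      ring
    exact h.deriv
  have hGamderiv_r : deriv (Gam n k g) r
      = deriv (deriv g) r
        + A * ((-1 / Real.sinh r ^ 2) * g r + (Real.cosh r / Real.sinh r) * deriv g r) :=
    hGamEq hr
  -- second derivative of Gam n k g at r
  have hderiv2 : deriv (deriv (Gam n k g)) r
      = deriv (fun x => deriv (deriv g) x
          + A * ((-1 / Real.sinh x ^ 2) * g x + (Real.cosh x / Real.sinh x) * deriv g x)) r := by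
    apply Filter.EventuallyEq.deriv_eq
    exact Filter.eventuallyEq_of_mem hmem hGamEq
  have hinner : HasDerivAt (fun x => deriv (deriv g) x
        + A * ((-1 / Real.sinh x ^ 2) * g x + (Real.cosh x / Real.sinh x) * deriv g x))
      (deriv (deriv (deriv g)) r
        + A * ((((0 * Real.sinh r ^ 2 - (-1) * (2 * Real.sinh r ^ 1 * Real.cosh r)) /
              (Real.sinh r ^ 2) ^ 2) * g r + (-1 / Real.sinh r ^ 2) * deriv g r)
            + ((-1 / Real.sinh r ^ 2) * deriv g r
              + (Real.cosh r / Real.sinh r) * deriv (deriv g) r))) r := by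
    have hinv : HasDerivAt (fun x => (-1 : ℝ) / Real.sinh x ^ 2)
        ((0 * Real.sinh r ^ 2 - (-1) * (2 * Real.sinh r ^ 1 * Real.cosh r)) /
          (Real.sinh r ^ 2) ^ 2) r :=
      (hasDerivAt_const r (-1:ℝ)).div (hsinhsq r hr) (pow_ne_zero 2 hs)
    have h1 := (hinv.mul (hH0 r hr)).add ((coth_hasDerivAt r hr0).mul (hH1 r hr))
    exact (hH2 r hr).add (h1.const_mul A)
  have hderiv2' : deriv (deriv (Gam n k g)) r
      = deriv (deriv (deriv g)) r
        + A * ((((0 * Real.sinh r ^ 2 - (-1) * (2 * Real.sinh r ^ 1 * Real.cosh r)) /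
              (Real.sinh r ^ 2) ^ 2) * g r + (-1 / Real.sinh r ^ 2) * deriv g r)
            + ((-1 / Real.sinh r ^ 2) * deriv g r
              + (Real.cosh r / Real.sinh r) * deriv (deriv g) r)) := by
    rw [hderiv2]; exact hinner.deriv
  -- now assemble
  have hkc : ((k - 1 : ℕ) : ℝ) = (k : ℝ) - 1 := by
    rw [Nat.cast_sub hk]; norm_num
  have hch : Real.cosh r ^ 2 = Real.sinh r ^ 2 + 1 := Real.cosh_sq r
  show deriv (Dop n k g) r + A * (Real.cosh r / Real.sinh r) * Dop n k g r
      = deriv (deriv (Gam n k g)) r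
        + B * (Real.cosh r / Real.sinh r) * deriv (Gam n k g) r
        - (M' / Real.sinh r ^ 2) * Gam n k g r
  rw [hDopderiv, hderiv2', hGamderiv_r]
  show _ = _ + _ - _ * (deriv g r + A * (Real.cosh r / Real.sinh r) * g r)
  have hDg : Dop n k g r = deriv (deriv g) r
      + B * (Real.cosh r / Real.sinh r) * deriv g r - (M / Real.sinh r ^ 2) * g r := rfl
  rw [hDg, hM', hkc, hA, hB, hM]
  field_simp
  ring
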